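/- Let A ∈ ℝ^{n×d} be spike-free and y ∈ ℝⁿ. Then the infimum, over all widths m ∈ ℕ, hidden weights U = [u_1 … u_m] with ‖u_j‖₂ ≤ 1 for all j, and output weights w ∈ ℝ^m satisfying (AU)_+ w = y, of ‖w‖₁ equals the optimal value of the convex program: minimize ‖w₁‖₂ + ‖w₂‖₂ over w₁, w₂ ∈ ℝ^d subject to A(w₁ − w₂) = y, Aw₁ ⪰ 0 and Aw₂ ⪰ 0 entrywise (both infima taken in [0, ∞]). -/

import Mathlib

/-!
A network of width `m` with unit hidden weights and output weights `w` is turned into a feasible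
point of the convex program by spike-freeness: each active pattern `(A u_j)_+` equals `A v_j` for
some unit `v_j`, so `w₁ = ∑ w_j⁺ v_j` and `w₂ = ∑ w_j⁻ v_j` satisfy the constraints and, by the
triangle inequality, cost at most `‖w‖₁`. Conversely, a feasible pair `(w₁, w₂)` is realised
exactly by two neurons `w₁ / ‖w₁‖₂` and `w₂ / ‖w₂‖₂` with output weights `‖w₁‖₂` and `-‖w₂‖₂`,
since `A w₁, A w₂ ⪰ 0` makes the ReLU act as the identity on them.
-/

open Finset Matrix

/-- Euclidean (ℓ2) norm of a finite-dimensional real vector. -/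
noncomputable def l2norm {k : ℕ} (x : Fin k → ℝ) : ℝ := Real.sqrt (∑ i, x i ^ 2)

/-- Entrywise ReLU of a vector. -/
def reluV {k : ℕ} (x : Fin k → ℝ) : Fin k → ℝ := fun i => max (x i) 0

/-- `A` is spike-free if `{(Au)_+ : u ∈ B₂} = {Au : u ∈ B₂} ∩ ℝ₊ⁿ`. -/
def IsSpikeFree {n d : ℕ} (A : Matrix (Fin n) (Fin d) ℝ) : Prop :=
  {x : Fin n → ℝ | ∃ u, l2norm u ≤ 1 ∧ x = reluV (A.mulVec u)} =
    {x : Fin n → ℝ | ∃ u, l2norm u ≤ 1 ∧ x = A.mulVec u} ∩ {x | ∀ i, 0 ≤ x i}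

/-- Output `(AU)_+ w = ∑_j w_j (A u_j)_+` of a bias-free two-layer ReLU network. -/
noncomputable def bfOut {n d m : ℕ} (A : Matrix (Fin n) (Fin d) ℝ)
    (U : Fin m → Fin d → ℝ) (w : Fin m → ℝ) : Fin n → ℝ :=
  ∑ j, w j • fun i => max (A.mulVec (U j) i) 0

section l2norm

variable {k : ℕ}

lemma l2norm_eq_norm_toLp (x : Fin k → ℝ) : l2norm x = ‖WithLp.toLp 2 x‖ := by
  simp [EuclideanSpace.norm_eq, l2norm, sq_abs]

lemma l2norm_nonneg (x : Fin k → ℝ) : 0 ≤ l2norm x := Real.sqrt_nonneg _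

lemma l2norm_eq_zero {x : Fin k → ℝ} : l2norm x = 0 ↔ x = 0 := by
  rw [l2norm_eq_norm_toLp, norm_eq_zero, WithLp.toLp_eq_zero]

lemma l2norm_smul (c : ℝ) (x : Fin k → ℝ) : l2norm (c • x) = |c| * l2norm x := by
  rw [l2norm_eq_norm_toLp, l2norm_eq_norm_toLp, WithLp.toLp_smul, norm_smul, Real.norm_eq_abs]

lemma l2norm_sum_le {m : ℕ} (f : Fin m → Fin k → ℝ) :
    l2norm (∑ j, f j) ≤ ∑ j, l2norm (f j) := by
  simp only [l2norm_eq_norm_toLp, WithLp.toLp_sum]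
  exact norm_sum_le _ _

lemma l2norm_sum_smul_le {m : ℕ} {c : Fin m → ℝ} (hc : ∀ j, 0 ≤ c j) {v : Fin m → Fin k → ℝ}
    (hv : ∀ j, l2norm (v j) ≤ 1) : l2norm (∑ j, c j • v j) ≤ ∑ j, c j :=
  (l2norm_sum_le _).trans <| sum_le_sum fun j _ => by
    rw [l2norm_smul, abs_of_nonneg (hc j)]
    exact mul_le_of_le_one_right (hc j) (hv j)

lemma l2norm_inv_smul_self_le_one (x : Fin k → ℝ) : l2norm ((l2norm x)⁻¹ • x) ≤ 1 := by
  rw [l2norm_smul, abs_of_nonneg (inv_nonneg.mpr (l2norm_nonneg x))]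
  exact inv_mul_le_one

end l2norm

lemma reluV_of_nonneg {k : ℕ} {x : Fin k → ℝ} (hx : ∀ i, 0 ≤ x i) : reluV x = x :=
  funext fun i => max_eq_left (hx i)

lemma bfOut_eq_sum {n d m : ℕ} (A : Matrix (Fin n) (Fin d) ℝ) (U : Fin m → Fin d → ℝ)
    (w : Fin m → ℝ) : bfOut A U w = ∑ j, w j • reluV (A *ᵥ U j) := rfl

section

variable {n d : ℕ} (A : Matrix (Fin n) (Fin d) ℝ)

lemma mulVec_sum_smul_nonneg {m : ℕ} {c : Fin m → ℝ} (hc : ∀ j, 0 ≤ c j)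
    {v : Fin m → Fin d → ℝ} (hv : ∀ j i, 0 ≤ (A *ᵥ v j) i) (i : Fin n) :
    0 ≤ (A *ᵥ ∑ j, c j • v j) i := by
  simp only [mulVec_sum, mulVec_smul, Finset.sum_apply, Pi.smul_apply, smul_eq_mul]
  exact sum_nonneg fun j _ => mul_nonneg (hc j) (hv j i)

lemma exists_l2norm_le_one_smul_reluV_eq {w : Fin d → ℝ} (hw : ∀ i, 0 ≤ (A *ᵥ w) i) :
    ∃ u, l2norm u ≤ 1 ∧ l2norm w • reluV (A *ᵥ u) = A *ᵥ w := by
  refine ⟨(l2norm w)⁻¹ • w, l2norm_inv_smul_self_le_one w, ?_⟩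
  have hnonneg : ∀ i, 0 ≤ (A *ᵥ (l2norm w)⁻¹ • w) i := fun i => by
    rw [mulVec_smul]
    exact mul_nonneg (inv_nonneg.mpr (l2norm_nonneg w)) (hw i)
  rw [reluV_of_nonneg hnonneg, mulVec_smul, smul_smul]
  rcases eq_or_ne w 0 with rfl | hw0
  · simp
  · rw [mul_inv_cancel₀ (mt l2norm_eq_zero.mp hw0), one_smul]

lemma IsSpikeFree.exists_mulVec_eq_reluV (hA : IsSpikeFree A) {u : Fin d → ℝ}
    (hu : l2norm u ≤ 1) : ∃ v, l2norm v ≤ 1 ∧ A *ᵥ v = reluV (A *ᵥ u) := by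
  have hmem : reluV (A *ᵥ u) ∈ {x | ∃ u, l2norm u ≤ 1 ∧ x = reluV (A *ᵥ u)} := ⟨u, hu, rfl⟩
  rw [hA] at hmem
  obtain ⟨⟨v, hv, hAv⟩, -⟩ := hmem
  exact ⟨v, hv, hAv.symm⟩

lemma exists_network_of_convex_feasible {y : Fin n → ℝ} {w₁ w₂ : Fin d → ℝ}
    (hy : A *ᵥ (w₁ - w₂) = y) (h₁ : ∀ i, 0 ≤ (A *ᵥ w₁) i) (h₂ : ∀ i, 0 ≤ (A *ᵥ w₂) i) :
    ∃ (U : Fin 2 → Fin d → ℝ) (w : Fin 2 → ℝ), (∀ j, l2norm (U j) ≤ 1) ∧ bfOut A U w = y ∧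
      ∑ j, |w j| = l2norm w₁ + l2norm w₂ := by
  obtain ⟨u₁, hu₁, hAu₁⟩ := exists_l2norm_le_one_smul_reluV_eq A h₁
  obtain ⟨u₂, hu₂, hAu₂⟩ := exists_l2norm_le_one_smul_reluV_eq A h₂
  refine ⟨![u₁, u₂], ![l2norm w₁, -l2norm w₂], fun j => ?_, ?_, ?_⟩
  · fin_cases j <;> assumption
  · simp [bfOut_eq_sum, Fin.sum_univ_two, hAu₁, hAu₂, neg_smul, ← sub_eq_add_neg, ← hy,
      mulVec_sub]
  · simp [Fin.sum_univ_two, abs_of_nonneg (l2norm_nonneg _)]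

lemma IsSpikeFree.exists_convex_feasible_of_network (hA : IsSpikeFree A) {y : Fin n → ℝ}
    {m : ℕ} {U : Fin m → Fin d → ℝ} {w : Fin m → ℝ} (hU : ∀ j, l2norm (U j) ≤ 1)
    (hy : bfOut A U w = y) :
    ∃ w₁ w₂ : Fin d → ℝ, A *ᵥ (w₁ - w₂) = y ∧ (∀ i, 0 ≤ (A *ᵥ w₁) i) ∧
      (∀ i, 0 ≤ (A *ᵥ w₂) i) ∧ l2norm w₁ + l2norm w₂ ≤ ∑ j, |w j| := by
  choose v hv hAv using fun j => hA.exists_mulVec_eq_reluV A (hU j)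
  have hAv_nonneg : ∀ j i, 0 ≤ (A *ᵥ v j) i := fun j i => by
    rw [hAv]
    exact le_max_right _ _
  refine ⟨∑ j, (w j)⁺ • v j, ∑ j, (w j)⁻ • v j, ?_,
    mulVec_sum_smul_nonneg A (fun j => posPart_nonneg _) hAv_nonneg,
    mulVec_sum_smul_nonneg A (fun j => negPart_nonneg _) hAv_nonneg, ?_⟩
  · simp only [mulVec_sum, mulVec_smul, hAv, ← sum_sub_distrib, ← sub_smul,
      posPart_sub_negPart, ← hy, bfOut_eq_sum]
  · calc l2norm (∑ j, (w j)⁺ • v j) + l2norm (∑ j, (w j)⁻ • v j)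
        ≤ ∑ j, (w j)⁺ + ∑ j, (w j)⁻ :=
          add_le_add (l2norm_sum_smul_le (fun j => posPart_nonneg _) hv)
            (l2norm_sum_smul_le (fun j => negPart_nonneg _) hv)
      _ = ∑ j, |w j| := by rw [← sum_add_distrib]; simp only [posPart_add_negPart]

end

/-- For a spike-free data matrix, the non-convex minimal ℓ1-norm interpolation problem
equals the convex program `min ‖w₁‖₂ + ‖w₂‖₂ s.t. A(w₁ - w₂) = y, Aw₁ ⪰ 0, Aw₂ ⪰ 0`
(infima in `[0,∞]`). -/
theorem stmt11 {n d : ℕ} (A : Matrix (Fin n) (Fin d) ℝ) (hA : IsSpikeFree A)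
    (y : Fin n → ℝ) :
    sInf {r : ENNReal | ∃ (m : ℕ) (U : Fin m → Fin d → ℝ) (w : Fin m → ℝ),
        (∀ j, l2norm (U j) ≤ 1) ∧ bfOut A U w = y ∧
        r = ENNReal.ofReal (∑ j, |w j|)} =
    sInf {r : ENNReal | ∃ w1 w2 : Fin d → ℝ,
        A.mulVec (w1 - w2) = y ∧ (∀ i, 0 ≤ A.mulVec w1 i) ∧ (∀ i, 0 ≤ A.mulVec w2 i) ∧
        r = ENNReal.ofReal (l2norm w1 + l2norm w2)} := by
  apply le_antisymm
  · refine le_sInf ?_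
    rintro _ ⟨w₁, w₂, hy, h₁, h₂, rfl⟩
    obtain ⟨U, w, hU, hUw, hcost⟩ := exists_network_of_convex_feasible A hy h₁ h₂
    exact sInf_le ⟨2, U, w, hU, hUw, by rw [hcost]⟩
  · refine le_sInf ?_
    rintro _ ⟨m, U, w, hU, hUw, rfl⟩
    obtain ⟨w₁, w₂, hy, h₁, h₂, hcost⟩ := hA.exists_convex_feasible_of_network A hU hUw
    exact sInf_le_of_le ⟨w₁, w₂, hy, h₁, h₂, rfl⟩ (ENNReal.ofReal_le_ofReal hcost)
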